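/- With T_{n} ⊙_k as the star with n leaves grafted to a path of k vertices at its center, for all positive integers n and k: 𝒢(T_{2n−1} ⊙_k) = 𝒢(T_{1} ⊙_k) = 𝒢(P_{k+2}) and 𝒢(T_{2n} ⊙_k) = 𝒢(T_{2} ⊙_k), where P_m is the path on m vertices and 𝒢 is the Node-Kayles Grundy value. -/

import Mathlib

/-- The minimum excluded value of a finite set of naturals. -/
noncomputable def mex (s : Finset ℕ) : ℕ := sInf {n : ℕ | n ∉ s}

/-- Node-Kayles Grundy value of the position given by the induced subgraph of `G`
on the finite vertex set `s`: a move picks a vertex `v ∈ s` and removes its closed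
neighborhood, and the Grundy value is the mex of the Grundy values of the options.
(For a disconnected position this agrees with the nim-sum of the components'
Grundy values, by the Sprague–Grundy theory.) -/
noncomputable def nkGrundy {V : Type*} [DecidableEq V] (G : SimpleGraph V) [DecidableRel G.Adj]
    (s : Finset V) : ℕ :=
  mex (s.attach.image fun v =>
    nkGrundy G ((s.erase v.1).filter fun w => ¬ G.Adj v.1 w))
termination_by s.card
decreasing_by
  exact lt_of_le_of_lt (Finset.card_filter_le _ _) (Finset.card_erase_lt_of_mem v.2)

instance {V : Type*} (r : V → V → Prop) [DecidableEq V] [DecidableRel r] :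
    DecidableRel (SimpleGraph.fromRel r).Adj :=
  fun a b => decidable_of_iff _ (SimpleGraph.fromRel_adj r a b).symm

/-- The star with `n` leaves together with a tail path of `k` extra vertices
attached to its center: center `0`, leaves `1, …, n`, path vertices
`n+1, …, n+k` (the center is joined to `n+1`).  Its vertex set is
`{0, …, n+k}`.  This is the graph `T_{n} ⊙_k`. -/
def starTail (n k : ℕ) : SimpleGraph ℕ :=
  SimpleGraph.fromRel (fun a b =>
    (a = 0 ∧ 1 ≤ b ∧ b ≤ n) ∨
    (a = 0 ∧ b = n + 1 ∧ 1 ≤ k) ∨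
    (n + 1 ≤ a ∧ a < n + k ∧ b = a + 1))

instance (n k : ℕ) : DecidableRel (starTail n k).Adj :=
  fun a b => decidable_of_iff _ (SimpleGraph.fromRel_adj _ a b).symm

/-- The path graph on ℕ: `i` adjacent to `i+1`; the path `P m` on `m` vertices
is its induced subgraph on `{0, …, m-1}`. -/
def pathGraph : SimpleGraph ℕ := SimpleGraph.fromRel (fun a b => a + 1 = b)

instance : DecidableRel pathGraph.Adj :=
  fun a b => decidable_of_iff _ (SimpleGraph.fromRel_adj _ a b).symm

/-! Three leaves of the star are pairwise twins (they have the same neighbourhood). In Node-Kayles,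
deleting two of three twins does not change the Grundy value: two isolated vertices add nim-value
`1 ⊕ 1 = 0`, a move at a deleted twin differs from the move at the surviving twin only by two such
isolated vertices, and the remaining moves correspond by induction. Hence
`𝒢(T_{n+2} ⊙_k) = 𝒢(T_n ⊙_k)` for `n ≥ 1`, and `T_1 ⊙_k` is `P_{k+2}` with its first two vertices
swapped. -/

open Finset

lemma mex_notMem (s : Finset ℕ) : mex s ∉ s :=
  Nat.sInf_mem s.finite_toSet.infinite_compl.nonempty

lemma mem_of_lt_mex {s : Finset ℕ} {m : ℕ} (h : m < mex s) : m ∈ s := by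
  by_contra hm
  exact absurd (Nat.sInf_le hm) (not_le.mpr h)

lemma mex_eq_of_subset {s t : Finset ℕ} (hst : s ⊆ t) (hs : mex s ∉ t) : mex t = mex s :=
  le_antisymm (Nat.sInf_le hs) (le_of_not_gt fun h => mex_notMem t (hst (mem_of_lt_mex h)))

namespace SimpleGraph

variable {V : Type*} {G : SimpleGraph V} {a b : V}

lemma adj_iff_of_neighborSet_eq (h : G.neighborSet a = G.neighborSet b) (x : V) :
    G.Adj a x ↔ G.Adj b x :=
  Set.ext_iff.mp h x

lemma adj_iff_of_neighborSet_eq' (h : G.neighborSet a = G.neighborSet b) (x : V) :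
    G.Adj x a ↔ G.Adj x b := by
  rw [G.adj_comm, adj_iff_of_neighborSet_eq h, G.adj_comm]

lemma not_adj_of_neighborSet_eq (h : G.neighborSet a = G.neighborSet b) : ¬ G.Adj a b :=
  fun hab => G.irrefl ((adj_iff_of_neighborSet_eq h b).mp hab)

end SimpleGraph

section NodeKayles

variable {V : Type*} [DecidableEq V] {G : SimpleGraph V} [DecidableRel G.Adj]

variable (G) in
def nkMove (s : Finset V) (v : V) : Finset V :=
  (s.erase v).filter fun w => ¬ G.Adj v w

lemma mem_nkMove {s : Finset V} {v w : V} :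
    w ∈ nkMove G s v ↔ w ∈ s ∧ w ≠ v ∧ ¬ G.Adj v w := by
  simp only [nkMove, mem_filter, mem_erase]
  tauto

lemma nkMove_ssubset {s : Finset V} {v : V} (hv : v ∈ s) : nkMove G s v ⊂ s :=
  (filter_subset _ _).trans_ssubset (erase_ssubset hv)

lemma nkMove_sdiff (s r : Finset V) (v : V) : nkMove G (s \ r) v = nkMove G s v \ r := by
  ext w
  simp only [mem_nkMove, mem_sdiff]
  tauto

lemma not_adj_of_mem_nkMove {s : Finset V} {a c x : V}
    (hc : G.neighborSet c = G.neighborSet a) (hx : x ∈ nkMove G s a) : ¬ G.Adj c x :=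
  (G.adj_iff_of_neighborSet_eq hc x).not.mpr (mem_nkMove.mp hx).2.2

variable (G) in
lemma nkGrundy_eq_mex (s : Finset V) :
    nkGrundy G s = mex (s.image fun v => nkGrundy G (nkMove G s v)) := by
  rw [nkGrundy]
  congr 1
  ext x
  simp only [mem_image, mem_attach, true_and, Subtype.exists, nkMove]
  tauto

lemma nkGrundy_nkMove_ne {s : Finset V} {v : V} (hv : v ∈ s) :
    nkGrundy G (nkMove G s v) ≠ nkGrundy G s := by
  intro h
  have := mex_notMem (s.image fun v => nkGrundy G (nkMove G s v))
  rw [← nkGrundy_eq_mex, ← h] at this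
  exact this (mem_image_of_mem _ hv)

lemma nkGrundy_eq_of_subset {s t : Finset V} (hts : t ⊆ s)
    (hmove : ∀ x ∈ t, nkGrundy G (nkMove G t x) = nkGrundy G (nkMove G s x))
    (hnew : ∀ y ∈ s \ t, nkGrundy G (nkMove G s y) ≠ nkGrundy G t) :
    nkGrundy G t = nkGrundy G s := by
  have hnot : ∀ y ∈ s, nkGrundy G (nkMove G s y) ≠ nkGrundy G t := fun y hy => by
    by_cases hyt : y ∈ t
    · exact hmove y hyt ▸ nkGrundy_nkMove_ne hyt
    · exact hnew y (mem_sdiff.mpr ⟨hy, hyt⟩)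
  rw [nkGrundy_eq_mex G s, nkGrundy_eq_mex G t]
  refine (mex_eq_of_subset ?_ ?_).symm
  · intro a ha
    obtain ⟨x, hx, rfl⟩ := mem_image.mp ha
    exact mem_image.mpr ⟨x, hts hx, (hmove x hx).symm⟩
  · rw [← nkGrundy_eq_mex]
    intro ht
    obtain ⟨y, hy, hval⟩ := mem_image.mp ht
    exact hnot y hy hval

section Image

variable {W : Type*} [DecidableEq W] {H : SimpleGraph W} [DecidableRel H.Adj] {f : V → W}

lemma nkMove_image {s : Finset V} (hf : Set.InjOn f s)
    (hadj : ∀ a ∈ s, ∀ b ∈ s, H.Adj (f a) (f b) ↔ G.Adj a b) {v : V} (hv : v ∈ s) :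
    nkMove H (s.image f) (f v) = (nkMove G s v).image f := by
  ext y
  simp only [mem_image, mem_nkMove]
  constructor
  · rintro ⟨⟨x, hx, rfl⟩, hxv, hna⟩
    exact ⟨x, ⟨hx, fun h => hxv (h ▸ rfl), fun h => hna ((hadj v hv x hx).mpr h)⟩, rfl⟩
  · rintro ⟨x, ⟨hx, hxv, hna⟩, rfl⟩
    exact ⟨⟨x, hx, rfl⟩, fun h => hxv (hf hx hv h), fun h => hna ((hadj v hv x hx).mp h)⟩

theorem nkGrundy_image {s : Finset V} (hf : Set.InjOn f s)
    (hadj : ∀ a ∈ s, ∀ b ∈ s, H.Adj (f a) (f b) ↔ G.Adj a b) :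
    nkGrundy H (s.image f) = nkGrundy G s := by
  induction s using Finset.strongInduction with
  | H s ih =>
    rw [nkGrundy_eq_mex H, nkGrundy_eq_mex G, image_image]
    congr 1
    refine image_congr fun v hv => ?_
    have hsub : nkMove G s v ⊆ s := (nkMove_ssubset hv).subset
    rw [Function.comp_apply, nkMove_image hf hadj hv]
    exact ih _ (nkMove_ssubset hv) (hf.mono hsub) fun a ha b hb => hadj a (hsub ha) b (hsub hb)

end Image

lemma nkGrundy_nkMove_ne_of_isolated {s : Finset V} {a b : V} (hb : b ∈ s) (hab : a ≠ b)
    (ha' : ∀ x ∈ s, ¬ G.Adj a x) (hb' : ∀ x ∈ s, ¬ G.Adj b x) :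
    nkGrundy G (nkMove G s a) ≠ nkGrundy G (s \ {a, b}) := by
  have hpos : s \ {a, b} = nkMove G (nkMove G s a) b := by
    ext x
    simp only [mem_sdiff, mem_insert, mem_singleton, mem_nkMove]
    constructor
    · rintro ⟨hx, hxab⟩
      exact ⟨⟨hx, fun h => hxab (.inl h), ha' x hx⟩, fun h => hxab (.inr h), hb' x hx⟩
    · rintro ⟨⟨hx, hxa, -⟩, hxb, -⟩
      exact ⟨hx, by tauto⟩
  rw [hpos]
  exact (nkGrundy_nkMove_ne (mem_nkMove.mpr ⟨hb, hab.symm, ha' b hb⟩)).symm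

theorem nkGrundy_sdiff_pair_of_isolated {s : Finset V} {u v : V} (hu : u ∈ s) (hv : v ∈ s)
    (huv : u ≠ v) (hu' : ∀ x ∈ s, ¬ G.Adj u x) (hv' : ∀ x ∈ s, ¬ G.Adj v x) :
    nkGrundy G (s \ {u, v}) = nkGrundy G s := by
  induction s using Finset.strongInduction with
  | H s ih =>
    refine nkGrundy_eq_of_subset sdiff_subset (fun x hx => ?_) (fun y hy => ?_)
    · obtain ⟨hxs, hxuv⟩ := mem_sdiff.mp hx
      simp only [mem_insert, mem_singleton, not_or] at hxuv
      have hsub := (nkMove_ssubset (G := G) hxs).subset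
      rw [nkMove_sdiff]
      exact ih _ (nkMove_ssubset hxs)
        (mem_nkMove.mpr ⟨hu, Ne.symm hxuv.1, fun h => hu' x hxs h.symm⟩)
        (mem_nkMove.mpr ⟨hv, Ne.symm hxuv.2, fun h => hv' x hxs h.symm⟩)
        (fun y hy => hu' y (hsub hy)) (fun y hy => hv' y (hsub hy))
    · obtain rfl | rfl : y = u ∨ y = v := by
        simp only [mem_sdiff, mem_insert, mem_singleton] at hy
        tauto
      · exact nkGrundy_nkMove_ne_of_isolated hv huv hu' hv'
      · rw [pair_comm]
        exact nkGrundy_nkMove_ne_of_isolated hu huv.symm hv' hu'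

lemma nkGrundy_nkMove_ne_of_twins {s : Finset V} {a b w : V} (hb : b ∈ s) (hw : w ∈ s)
    (hab : a ≠ b) (haw : a ≠ w) (hbw : b ≠ w)
    (ha' : G.neighborSet a = G.neighborSet w) (hb' : G.neighborSet b = G.neighborSet w) :
    nkGrundy G (nkMove G s a) ≠ nkGrundy G (s \ {a, b}) := by
  have hb_move : b ∈ nkMove G s a :=
    mem_nkMove.mpr ⟨hb, hab.symm, G.not_adj_of_neighborSet_eq (ha'.trans hb'.symm)⟩
  have hw_move : w ∈ nkMove G s a :=
    mem_nkMove.mpr ⟨hw, haw.symm, G.not_adj_of_neighborSet_eq ha'⟩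
  have hpos : nkMove G s a \ {b, w} = nkMove G (s \ {a, b}) w := by
    ext x
    simp only [mem_sdiff, mem_insert, mem_singleton, mem_nkMove,
      G.adj_iff_of_neighborSet_eq ha']
    tauto
  rw [← nkGrundy_sdiff_pair_of_isolated hb_move hw_move hbw
    (fun x => not_adj_of_mem_nkMove (hb'.trans ha'.symm))
    (fun x => not_adj_of_mem_nkMove ha'.symm), hpos]
  exact nkGrundy_nkMove_ne (by simp [hw, haw.symm, hbw.symm])

theorem nkGrundy_sdiff_twins {s : Finset V} {u v w : V} (hu : u ∈ s) (hv : v ∈ s) (hw : w ∈ s)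
    (huv : u ≠ v) (huw : u ≠ w) (hvw : v ≠ w)
    (hu' : G.neighborSet u = G.neighborSet w) (hv' : G.neighborSet v = G.neighborSet w) :
    nkGrundy G (s \ {u, v}) = nkGrundy G s := by
  induction s using Finset.strongInduction with
  | H s ih =>
    refine nkGrundy_eq_of_subset sdiff_subset (fun x hx => ?_) (fun y hy => ?_)
    · obtain ⟨hxs, hxuv⟩ := mem_sdiff.mp hx
      simp only [mem_insert, mem_singleton, not_or] at hxuv
      rw [nkMove_sdiff]
      by_cases hxw : G.Adj x w
      · rw [sdiff_eq_self_of_disjoint]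
        simp only [disjoint_insert_right, disjoint_singleton_right, mem_nkMove, not_and,
          not_not]
        exact ⟨fun _ _ => (G.adj_iff_of_neighborSet_eq' hu' x).mpr hxw,
          fun _ _ => (G.adj_iff_of_neighborSet_eq' hv' x).mpr hxw⟩
      have hmem : ∀ c ∈ s, c ≠ x → G.neighborSet c = G.neighborSet w → c ∈ nkMove G s x :=
        fun c hc hcx hcw =>
          mem_nkMove.mpr ⟨hc, hcx, (G.adj_iff_of_neighborSet_eq' hcw x).not.mpr hxw⟩
      obtain rfl | hxw' := eq_or_ne x w
      · exact nkGrundy_sdiff_pair_of_isolated (hmem u hu huw hu') (hmem v hv hvw hv') huv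
          (fun y => not_adj_of_mem_nkMove hu') (fun y => not_adj_of_mem_nkMove hv')
      · exact ih _ (nkMove_ssubset hxs) (hmem u hu (Ne.symm hxuv.1) hu')
          (hmem v hv (Ne.symm hxuv.2) hv') (hmem w hw hxw'.symm rfl)
    · obtain rfl | rfl : y = u ∨ y = v := by
        simp only [mem_sdiff, mem_insert, mem_singleton] at hy
        tauto
      · exact nkGrundy_nkMove_ne_of_twins hv hw huv huw hvw hu' hv'
      · rw [pair_comm]
        exact nkGrundy_nkMove_ne_of_twins hu hw huv.symm hvw huw hv' hu'

end NodeKayles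

lemma starTail_adj {n k a b : ℕ} : (starTail n k).Adj a b ↔ a ≠ b ∧
    (((a = 0 ∧ 1 ≤ b ∧ b ≤ n) ∨ (a = 0 ∧ b = n + 1 ∧ 1 ≤ k) ∨
        (n + 1 ≤ a ∧ a < n + k ∧ b = a + 1)) ∨
      ((b = 0 ∧ 1 ≤ a ∧ a ≤ n) ∨ (b = 0 ∧ a = n + 1 ∧ 1 ≤ k) ∨
        (n + 1 ≤ b ∧ b < n + k ∧ a = b + 1))) := by
  simp [starTail, SimpleGraph.fromRel_adj]

lemma pathGraph_adj {a b : ℕ} : pathGraph.Adj a b ↔ a ≠ b ∧ (a + 1 = b ∨ b + 1 = a) := by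
  simp [pathGraph, SimpleGraph.fromRel_adj]

lemma starTail_neighborSet_leaf {n k i : ℕ} (hi : 1 ≤ i) (hin : i ≤ n) :
    (starTail n k).neighborSet i = {0} := by
  ext x
  simp only [SimpleGraph.mem_neighborSet, starTail_adj, Set.mem_singleton_iff]
  omega

theorem nkGrundy_starTail_add_two {n : ℕ} (hn : 1 ≤ n) (k : ℕ) :
    nkGrundy (starTail (n + 2) k) (range (n + 2 + k + 1)) =
      nkGrundy (starTail n k) (range (n + k + 1)) := by
  have hmem : ∀ i ≤ 3, i ∈ range (n + 2 + k + 1) := fun i hi => mem_range.mpr (by omega)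
  have htwin : ∀ i, 1 ≤ i → i ≤ 3 →
      (starTail (n + 2) k).neighborSet i = (starTail (n + 2) k).neighborSet 3 := fun i hi hi3 => by
    rw [starTail_neighborSet_leaf hi (by omega), starTail_neighborSet_leaf (by omega) (by omega)]
  rw [← nkGrundy_sdiff_twins (hmem 1 (by omega)) (hmem 2 (by omega)) (hmem 3 le_rfl)
    (by decide) (by decide) (by decide) (htwin 1 le_rfl (by omega)) (htwin 2 (by omega) (by omega))]
  have himage : range (n + 2 + k + 1) \ {1, 2} =
      (range (n + k + 1)).image fun x => if x = 0 then 0 else x + 2 := by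
    ext y
    simp only [mem_sdiff, mem_range, mem_insert, mem_singleton, mem_image]
    constructor
    · rintro ⟨hy, hy12⟩
      by_cases hy0 : y = 0
      · exact ⟨0, by omega, by simp [hy0]⟩
      · exact ⟨y - 2, by omega, by rw [if_neg (by omega)]; omega⟩
    · rintro ⟨x, hx, rfl⟩
      split_ifs
      · simp
      · omega
  rw [himage]
  refine nkGrundy_image (fun x _ y _ h => ?_) fun a ha b hb => ?_
  · split_ifs at h <;> omega
  · rw [mem_range] at ha hb
    simp only [starTail_adj]
    split_ifs <;> simp only [true_and, false_and, and_false, false_or, or_false] <;> omega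

theorem nkGrundy_starTail_add_two_mul {n : ℕ} (hn : 1 ≤ n) (j k : ℕ) :
    nkGrundy (starTail (n + 2 * j) k) (range (n + 2 * j + k + 1)) =
      nkGrundy (starTail n k) (range (n + k + 1)) := by
  induction j with
  | zero => rfl
  | succ j ih =>
    rw [show n + 2 * (j + 1) = n + 2 * j + 2 by ring, nkGrundy_starTail_add_two (by omega), ih]

theorem nkGrundy_starTail_one (k : ℕ) :
    nkGrundy (starTail 1 k) (range (1 + k + 1)) = nkGrundy pathGraph (range (k + 2)) := by
  have himage : (range (k + 2)).image (Equiv.swap 0 1) = range (1 + k + 1) := by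
    ext y
    simp only [mem_image, mem_range, Equiv.swap_apply_def]
    constructor
    · rintro ⟨x, hx, rfl⟩
      split_ifs <;> omega
    · intro hy
      refine ⟨Equiv.swap 0 1 y, ?_, Equiv.swap_apply_self _ _ _⟩
      simp only [Equiv.swap_apply_def]
      split_ifs <;> omega
  rw [← himage]
  refine nkGrundy_image (Equiv.swap 0 1).injective.injOn fun a ha b hb => ?_
  rw [mem_range] at ha hb
  simp only [starTail_adj, pathGraph_adj, Equiv.swap_apply_def]
  split_ifs <;> (try simp only [true_and, false_and, and_false, false_or, or_false]) <;> omega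

theorem nkGrundy_starTail_parity_general (n k : ℕ) (hn : 1 ≤ n) :
    (nkGrundy (starTail (2 * n - 1) k) (Finset.range ((2 * n - 1) + k + 1)) =
        nkGrundy (starTail 1 k) (Finset.range (1 + k + 1)) ∧
      nkGrundy (starTail 1 k) (Finset.range (1 + k + 1)) =
        nkGrundy pathGraph (Finset.range (k + 2))) ∧
    nkGrundy (starTail (2 * n) k) (Finset.range (2 * n + k + 1)) =
      nkGrundy (starTail 2 k) (Finset.range (2 + k + 1)) := by
  obtain ⟨m, rfl⟩ : ∃ m, n = m + 1 := ⟨n - 1, by omega⟩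
  refine ⟨⟨?_, nkGrundy_starTail_one k⟩, ?_⟩
  · rw [show 2 * (m + 1) - 1 = 1 + 2 * m by omega]
    exact nkGrundy_starTail_add_two_mul le_rfl m k
  · rw [show 2 * (m + 1) = 2 + 2 * m by ring]
    exact nkGrundy_starTail_add_two_mul (by decide) m k

/-- For all positive `n, k`:
`𝒢(T_{2n-1} ⊙_k) = 𝒢(T_{1} ⊙_k) = 𝒢(P_{k+2})` and
`𝒢(T_{2n} ⊙_k) = 𝒢(T_{2} ⊙_k)`. -/
theorem nkGrundy_starTail_parity (n k : ℕ) (hn : 1 ≤ n) (hk : 1 ≤ k) :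
    (nkGrundy (starTail (2 * n - 1) k) (Finset.range ((2 * n - 1) + k + 1)) =
        nkGrundy (starTail 1 k) (Finset.range (1 + k + 1)) ∧
      nkGrundy (starTail 1 k) (Finset.range (1 + k + 1)) =
        nkGrundy pathGraph (Finset.range (k + 2))) ∧
    nkGrundy (starTail (2 * n) k) (Finset.range (2 * n + k + 1)) =
      nkGrundy (starTail 2 k) (Finset.range (2 + k + 1)) :=
  nkGrundy_starTail_parity_general n k hn
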